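/- Let n ≥ 1 and let A^1, …, A^n be finite simple graphs containing no isolated vertices. Then the product γ_pr(A^1)·γ_pr(A^2)···γ_pr(A^n) is at most 2^(n−1)·(2n − 1)·γ_pr(A^1 □ ⋯ □ A^n). -/

import Mathlib

open SimpleGraph

/-- `D` is a dominating set of `G`: every vertex not in `D` has a neighbor in `D`. -/
def IsDomSet {V : Type*} (G : SimpleGraph V) (D : Finset V) : Prop :=
  ∀ v : V, v ∉ D → ∃ u ∈ D, G.Adj u v

/-- `D` is a paired dominating set of `G`: a dominating set such that the subgraph
of `G` induced by `D` has a perfect matching, i.e. there is a matching subgraph of `G`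
whose vertex set is exactly `D`. -/
def IsPairedDomSet {V : Type*} (G : SimpleGraph V) (D : Finset V) : Prop :=
  IsDomSet G D ∧ ∃ M : G.Subgraph, M.verts = ↑D ∧ M.IsMatching

/-- The paired domination number `γ_pr(G)`. -/
noncomputable def pairedDomNum {V : Type*} [Fintype V] (G : SimpleGraph V) : ℕ :=
  sInf {k : ℕ | ∃ D : Finset V, IsPairedDomSet G D ∧ D.card = k}

/-- The `n`-fold Cartesian (box) product `A^1 □ A^2 □ ⋯ □ A^n` of a family of graphs:
vertices `u` and `v` are adjacent iff there is an index `i` with `(u i, v i)` an edge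
of `A i` and `u j = v j` for all `j ≠ i`. -/
def boxProdPi {n : ℕ} {V : Fin n → Type*} (A : ∀ i, SimpleGraph (V i)) :
    SimpleGraph (∀ i, V i) where
  Adj u v := ∃ i, (A i).Adj (u i) (v i) ∧ ∀ j, j ≠ i → u j = v j
  symm := by
    constructor
    rintro u v ⟨i, hadj, heq⟩
    exact ⟨i, hadj.symm, fun j hj => (heq j hj).symm⟩
  loopless := by
    constructor
    rintro u ⟨i, hadj, -⟩
    exact hadj.ne rfl


/-!
A dominating set of a graph without isolated vertices made of `m` edges and `k` further vertices
is greedily turned into a paired dominating set with at most `2m + 2k` vertices; every upper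
bound on `γ_pr` below comes from this.

Let `D` be a minimum paired dominating set of the product with partner map `μ`; the pair
`{d, μ d}` differs in exactly one coordinate, its direction. Write `D^i` for the elements of
direction `i` and `D^{¬i}` for the others, and fix `z = 0`. For `j ≠ z`, a minimum paired
dominating set of `A j` gives `γ_pr(A j) / 2` edges whose closed neighbourhoods cover `A j`;
choosing a covering edge for every vertex cuts `∏_{j ≠ z} V j` into `∏_{j ≠ z} γ_pr(A j) / 2`
cells. In a cell `c` the `z`-coordinates of `D` dominate `A z` except for some uncovered vertices,
and the pairs of direction `z` project to edges, so
`γ_pr(A z) ≤ 2 |D_c^{¬z}| + |D_c^z| + 2 · #uncovered`. If `v` is uncovered in `c`, then for some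
`i ≠ z` the block `c i` is full: all its vertices are dominated by `D` on the line through
`(v, c)` in direction `i`. The same bound in `A i`, line by line, gives
`2 · #full blocks ≤ 2 |D^{¬i}| + |D^i|`. Altogether
`#cells · γ_pr(A z) ≤ ∑ᵢ (2 |D^{¬i}| + |D^i|) = (2n - 1) |D|`.
-/

open Finset

section PairedDomination

variable {V : Type*} {G : SimpleGraph V}

lemma IsDomSet.mono {X Y : Finset V} (hX : IsDomSet G X) (hXY : X ⊆ Y) : IsDomSet G Y := by
  intro v hv
  obtain ⟨u, hu, huv⟩ := hX v fun h => hv (hXY h)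
  exact ⟨u, hXY hu, huv⟩

lemma IsDomSet.of_insert [DecidableEq V] {X : Finset V} {y : V} (h : IsDomSet G (insert y X))
    (hy : ∃ u, G.Adj u y) (hN : ∀ u, G.Adj y u → u ∈ X) : IsDomSet G X := by
  intro v hv
  by_cases hvy : v = y
  · subst hvy
    obtain ⟨u, hu⟩ := hy
    exact ⟨u, hN u hu.symm, hu⟩
  obtain ⟨u, hu, huv⟩ := h v (by simp [hvy, hv])
  rcases mem_insert.mp hu with rfl | hu
  · exact absurd (hN v huv) hv
  · exact ⟨u, hu, huv⟩

lemma exists_isMatching_empty : ∃ M : G.Subgraph, M.verts = ↑(∅ : Finset V) ∧ M.IsMatching :=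
  ⟨⊥, by simp, fun _ h => (Set.notMem_empty _ h).elim⟩

lemma exists_isMatching_insert_insert [DecidableEq V] {S : Finset V} {a b : V}
    (hS : ∃ M : G.Subgraph, M.verts = ↑S ∧ M.IsMatching) (hab : G.Adj a b)
    (ha : a ∉ S) (hb : b ∉ S) :
    ∃ M : G.Subgraph, M.verts = ↑(insert a (insert b S)) ∧ M.IsMatching := by
  obtain ⟨M, hMS, hM⟩ := hS
  have hab' := SimpleGraph.Subgraph.IsMatching.subgraphOfAdj hab
  refine ⟨M ⊔ G.subgraphOfAdj hab, ?_, hM.sup hab' ?_⟩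
  · ext v
    simp [hMS]
  · rw [hM.support_eq_verts, hab'.support_eq_verts, hMS]
    simp [ha, hb]

lemma exists_isPairedDomSet_card_le_of_isDomSet_union [DecidableEq V]
    (hG : ∀ v, ∃ u, G.Adj u v) (Y : Finset V) {S : Finset V}
    (hS : ∃ M : G.Subgraph, M.verts = ↑S ∧ M.IsMatching) (hdom : IsDomSet G (S ∪ Y)) :
    ∃ D, IsPairedDomSet G D ∧ #D ≤ #S + 2 * #Y := by
  induction Y using Finset.induction generalizing S with
  | empty => exact ⟨S, ⟨by simpa using hdom, hS⟩, by simp⟩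
  | @insert y Y hyY ih =>
    rw [union_insert] at hdom
    rw [card_insert_of_notMem hyY]
    by_cases hyS : y ∈ S
    · obtain ⟨D, hD, hcard⟩ := ih hS (by rwa [insert_eq_of_mem (mem_union_left _ hyS)] at hdom)
      exact ⟨D, hD, by omega⟩
    -- Greedy: match `y` to a free neighbour if there is one; otherwise every neighbour of `y`
    -- is already matched and `y` can be dropped.
    by_cases hfree : ∃ u, G.Adj y u ∧ u ∉ S
    · obtain ⟨u, hyu, hu⟩ := hfree
      obtain ⟨D, hD, hcard⟩ := ih (exists_isMatching_insert_insert hS hyu hyS hu)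
        (hdom.mono fun v => by simp only [mem_union, mem_insert]; tauto)
      rw [card_insert_of_notMem (by simp [hyS, hyu.ne]), card_insert_of_notMem hu] at hcard
      exact ⟨D, hD, by omega⟩
    · push Not at hfree
      obtain ⟨D, hD, hcard⟩ :=
        ih hS (hdom.of_insert (hG y) fun u hu => mem_union_left _ (hfree u hu))
      exact ⟨D, hD, by omega⟩

lemma exists_isPairedDomSet_card_le_of_isDomSet_union_edges [DecidableEq V]
    (hG : ∀ v, ∃ u, G.Adj u v) (C : Finset (Sym2 V)) (hC : ∀ e ∈ C, e ∈ G.edgeSet)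
    (Y : Finset V) {S : Finset V} (hS : ∃ M : G.Subgraph, M.verts = ↑S ∧ M.IsMatching)
    (hdom : IsDomSet G (S ∪ C.biUnion Sym2.toFinset ∪ Y)) :
    ∃ D, IsPairedDomSet G D ∧ #D ≤ #S + 2 * #C + 2 * #Y := by
  induction C using Finset.induction generalizing S Y with
  | empty =>
    simpa using exists_isPairedDomSet_card_le_of_isDomSet_union hG Y hS (by simpa using hdom)
  | @insert e C heC ih =>
    induction e using Sym2.ind with | _ a b => ?_
    have hab : G.Adj a b := hC _ (mem_insert_self _ _)
    have hC' : ∀ e ∈ C, e ∈ G.edgeSet := fun e he => hC e (mem_insert_of_mem he)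
    simp only [biUnion_insert] at hdom
    rw [card_insert_of_notMem heC]
    -- An edge with both ends free joins the matching; otherwise its other end joins `Y`.
    by_cases ha : a ∈ S
    · obtain ⟨D, hD, hcard⟩ := ih hC' (insert b Y) hS <| hdom.mono fun v => by
        simp only [mem_union, mem_insert, mem_biUnion, Sym2.mem_toFinset, Sym2.mem_iff]
        aesop
      exact ⟨D, hD, by grind [card_insert_le]⟩
    by_cases hb : b ∈ S
    · obtain ⟨D, hD, hcard⟩ := ih hC' (insert a Y) hS <| hdom.mono fun v => by
        simp only [mem_union, mem_insert, mem_biUnion, Sym2.mem_toFinset, Sym2.mem_iff]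
        aesop
      exact ⟨D, hD, by grind [card_insert_le]⟩
    obtain ⟨D, hD, hcard⟩ := ih hC' Y (exists_isMatching_insert_insert hS hab ha hb) <|
      hdom.mono fun v => by
        simp only [mem_union, mem_insert, mem_biUnion, Sym2.mem_toFinset, Sym2.mem_iff]
        aesop
    rw [card_insert_of_notMem (by simp [ha, hab.ne]), card_insert_of_notMem hb] at hcard
    exact ⟨D, hD, by omega⟩

lemma IsPairedDomSet.exists_partner {D : Finset V} (h : IsPairedDomSet G D) :
    ∃ μ : V → V, ∀ d ∈ D, μ d ∈ D ∧ G.Adj d (μ d) ∧ μ (μ d) = d := by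
  classical
  obtain ⟨M, hMD, hM⟩ := h.2
  have hverts : ∀ {d}, d ∈ D ↔ d ∈ M.verts := by simp [hMD]
  choose! μ hμ using fun d (hd : d ∈ D) => (hM (hverts.mp hd)).exists
  refine ⟨μ, fun d hd => ?_⟩
  have hμd : μ d ∈ D := hverts.mpr (M.edge_vert (hμ d hd).symm)
  exact ⟨hμd, M.adj_sub (hμ d hd), hM.eq_of_adj_left (hμ _ hμd) (hμ d hd).symm⟩

end PairedDomination

lemma two_mul_card_image_le_of_involutive {α β : Type*} [DecidableEq β] (s : Finset α)
    (μ : α → α) (f : α → β) (hμ : ∀ a ∈ s, μ a ∈ s ∧ μ a ≠ a ∧ f (μ a) = f a) :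
    2 * #(s.image f) ≤ #s := by
  classical
  refine mul_card_image_le_card s 2 fun b hb => ?_
  obtain ⟨a, ha, rfl⟩ := mem_image.mp hb
  obtain ⟨hμa, hne, hf⟩ := hμ a ha
  calc 2 = #{a, μ a} := (card_pair hne.symm).symm
    _ ≤ _ := card_le_card fun x hx => by
      rcases mem_insert.mp hx with rfl | hx
      · simpa using ha
      · rw [mem_singleton.mp hx]
        simpa using ⟨hμa, hf⟩

lemma sum_card_filter_fiber {α γ : Type*} [DecidableEq γ] (s : Finset α) (t : Finset γ)
    (f : α → γ) (hf : ∀ a ∈ s, f a ∈ t) (q : α → Prop) [DecidablePred q] :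
    ∑ c ∈ t, #{a ∈ {a ∈ s | f a = c} | q a} = #{a ∈ s | q a} := by
  rw [card_eq_sum_card_fiberwise fun a ha => hf a (mem_filter.mp ha).1]
  exact sum_congr rfl fun c _ => by rw [filter_comm]

section PairedDomNum

variable {V : Type*} [Fintype V] {G : SimpleGraph V}

lemma IsPairedDomSet.pairedDomNum_le {D : Finset V} (h : IsPairedDomSet G D) :
    pairedDomNum G ≤ #D :=
  Nat.sInf_le ⟨D, h, rfl⟩

lemma exists_isPairedDomSet_card_eq_pairedDomNum (hG : ∀ v, ∃ u, G.Adj u v) :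
    ∃ D, IsPairedDomSet G D ∧ #D = pairedDomNum G := by
  classical
  obtain ⟨D, hD, -⟩ := exists_isPairedDomSet_card_le_of_isDomSet_union hG univ
    exists_isMatching_empty (by simp [IsDomSet])
  exact Nat.sInf_mem (s := {k | ∃ D, IsPairedDomSet G D ∧ #D = k}) ⟨#D, D, hD, rfl⟩

variable [DecidableEq V]

lemma pairedDomNum_le_of_isDomSet (hG : ∀ v, ∃ u, G.Adj u v)
    (C : Finset (Sym2 V)) (hC : ∀ e ∈ C, e ∈ G.edgeSet) (Y : Finset V)
    (hdom : IsDomSet G (C.biUnion Sym2.toFinset ∪ Y)) :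
    pairedDomNum G ≤ 2 * #C + 2 * #Y := by
  obtain ⟨D, hD, hcard⟩ := exists_isPairedDomSet_card_le_of_isDomSet_union_edges hG C hC Y
    exists_isMatching_empty (by simpa using hdom)
  simpa using hD.pairedDomNum_le.trans hcard

lemma exists_edges_two_mul_card_eq_pairedDomNum (hG : ∀ v, ∃ u, G.Adj u v) :
    ∃ P : Finset (Sym2 V), (∀ e ∈ P, e ∈ G.edgeSet) ∧
      (∀ w, ∃ e ∈ P, ∃ u ∈ e, u = w ∨ G.Adj u w) ∧ 2 * #P = pairedDomNum G := by
  obtain ⟨S, hS, hcard⟩ := exists_isPairedDomSet_card_eq_pairedDomNum hG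
  obtain ⟨μ, hμ⟩ := hS.exists_partner
  set P := S.image fun s => s(s, μ s)
  have hP : ∀ e ∈ P, e ∈ G.edgeSet := by
    simp only [P, mem_image]
    rintro _ ⟨s, hs, rfl⟩
    exact (hμ s hs).2.1
  have hcover : ∀ w, ∃ e ∈ P, ∃ u ∈ e, u = w ∨ G.Adj u w := by
    intro w
    by_cases hw : w ∈ S
    · exact ⟨_, mem_image_of_mem _ hw, w, Sym2.mem_mk_left _ _, .inl rfl⟩
    · obtain ⟨u, hu, huw⟩ := hS.1 w hw
      exact ⟨_, mem_image_of_mem _ hu, u, Sym2.mem_mk_left _ _, .inr huw⟩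
  have hdom : IsDomSet G (P.biUnion Sym2.toFinset) :=
    hS.1.mono fun s hs => mem_biUnion.mpr ⟨_, mem_image_of_mem _ hs, by simp⟩
  have hle : 2 * #P ≤ #S := two_mul_card_image_le_of_involutive S μ _ fun s hs =>
    ⟨(hμ s hs).1, (hμ s hs).2.1.ne', by rw [(hμ s hs).2.2, Sym2.eq_swap]⟩
  have hge := pairedDomNum_le_of_isDomSet hG P hP ∅ (by simpa using hdom)
  exact ⟨P, hP, hcover, by simp only [card_empty, mul_zero, add_zero] at hge; omega⟩

/-- The elements of `T` that `μ` moves come in pairs projecting to one edge, so each costs `1`;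
the others cost `2`. -/
lemma pairedDomNum_le_of_partner {α : Type*} (hG : ∀ v, ∃ u, G.Adj u v) (T : Finset α)
    (π : α → V) (μ : α → α)
    (hμ : ∀ t ∈ T, π (μ t) ≠ π t → μ t ∈ T ∧ G.Adj (π t) (π (μ t)) ∧ μ (μ t) = t)
    (C : Finset (Sym2 V)) (hC : ∀ e ∈ C, e ∈ G.edgeSet) (Y : Finset V)
    (hdom : IsDomSet G (T.image π ∪ C.biUnion Sym2.toFinset ∪ Y)) :
    pairedDomNum G ≤
      2 * #{t ∈ T | π (μ t) = π t} + #{t ∈ T | π (μ t) ≠ π t} + 2 * #C + 2 * #Y := by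
  set Tfix := {t ∈ T | π (μ t) = π t}
  set Tmove := {t ∈ T | π (μ t) ≠ π t}
  set E := Tmove.image fun t => s(π t, π (μ t))
  have hE : 2 * #E ≤ #Tmove := by
    refine two_mul_card_image_le_of_involutive Tmove μ _ fun t ht => ?_
    obtain ⟨htT, hne⟩ := mem_filter.mp ht
    obtain ⟨hμT, -, hμμ⟩ := hμ t htT hne
    refine ⟨mem_filter.mpr ⟨hμT, ?_⟩, fun h => hne (by rw [h]), ?_⟩
    · rw [hμμ]
      exact Ne.symm hne
    · rw [hμμ, Sym2.eq_swap]
  have hCE : ∀ e ∈ C ∪ E, e ∈ G.edgeSet := by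
    intro e he
    rcases mem_union.mp he with he | he
    · exact hC e he
    · obtain ⟨t, ht, rfl⟩ := mem_image.mp he
      exact (hμ t (mem_filter.mp ht).1 (mem_filter.mp ht).2).2.1
  have hdom' : IsDomSet G ((C ∪ E).biUnion Sym2.toFinset ∪ (Y ∪ Tfix.image π)) := by
    refine hdom.mono fun v hv => ?_
    simp only [mem_union, mem_image, mem_biUnion, Sym2.mem_toFinset] at hv ⊢
    rcases hv with (⟨t, ht, rfl⟩ | ⟨e, he, hve⟩) | hv
    · by_cases hfix : π (μ t) = π t
      · exact .inr (.inr ⟨t, mem_filter.mpr ⟨ht, hfix⟩, rfl⟩)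
      · exact .inl ⟨_, .inr (mem_image_of_mem _ (mem_filter.mpr ⟨ht, hfix⟩)),
          Sym2.mem_mk_left _ _⟩
    · exact .inl ⟨e, .inl he, hve⟩
    · exact .inr (.inl hv)
  calc pairedDomNum G ≤ 2 * #(C ∪ E) + 2 * #(Y ∪ Tfix.image π) :=
        pairedDomNum_le_of_isDomSet hG _ hCE _ hdom'
    _ ≤ 2 * (#C + #E) + 2 * (#Y + #Tfix) := by
        gcongr
        · exact card_union_le _ _
        · exact (card_union_le _ _).trans (by gcongr; exact card_image_le)
    _ ≤ _ := by omega

end PairedDomNum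

section BoxProduct

variable {n : ℕ} {V : Fin n → Type*} {A : ∀ i, SimpleGraph (V i)}

lemma boxProdPi_adj_of_apply_ne {u v : ∀ i, V i} (h : (boxProdPi A).Adj u v) {i : Fin n}
    (hi : u i ≠ v i) : (A i).Adj (u i) (v i) ∧ ∀ j ≠ i, u j = v j := by
  obtain ⟨k, hk, heq⟩ := h
  obtain rfl : k = i := by_contra fun hki => hi (heq i (Ne.symm hki))
  exact ⟨hk, heq⟩

lemma card_filter_apply_ne_of_boxProdPi_adj [∀ i, DecidableEq (V i)] {u v : ∀ i, V i}
    (h : (boxProdPi A).Adj u v) : #{i | u i ≠ v i} = 1 := by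
  obtain ⟨k, hk, heq⟩ := h
  refine card_eq_one.mpr ⟨k, ext fun i => ?_⟩
  simp only [mem_filter, mem_univ, true_and, mem_singleton]
  exact ⟨fun hi => by_contra fun hik => hi (heq i hik), fun hik => hik ▸ hk.ne⟩

lemma boxProdPi_exists_adj (i : Fin n) (hA : ∀ v : V i, ∃ u, (A i).Adj u v) (x : ∀ j, V j) :
    ∃ y, (boxProdPi A).Adj y x := by
  obtain ⟨u, hu⟩ := hA (x i)
  exact ⟨Function.update x i u, i, by simpa using hu, fun j hj => by simp [hj]⟩

variable {D : Finset (∀ i, V i)} {μ : (∀ i, V i) → ∀ i, V i}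

lemma partner_mem_fiber_of_apply_ne
    (hμ : ∀ d ∈ D, μ d ∈ D ∧ (boxProdPi A).Adj d (μ d) ∧ μ (μ d) = d)
    {γ : Type*} [DecidableEq γ] {i : Fin n} {f : (∀ j, V j) → γ}
    (hf : ∀ x y : ∀ j, V j, (∀ j ≠ i, x j = y j) → f x = f y) (κ : γ) :
    ∀ d ∈ {d ∈ D | f d = κ}, μ d i ≠ d i →
      μ d ∈ {d ∈ D | f d = κ} ∧ (A i).Adj (d i) (μ d i) ∧ μ (μ d) = d := by
  intro d hd hne
  obtain ⟨hdD, rfl⟩ := mem_filter.mp hd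
  obtain ⟨hμD, hadj, hμμ⟩ := hμ d hdD
  obtain ⟨hadj_i, heq⟩ := boxProdPi_adj_of_apply_ne hadj (Ne.symm hne)
  exact ⟨mem_filter.mpr ⟨hμD, (hf d (μ d) heq).symm⟩, hadj_i, hμμ⟩

variable [∀ i, DecidableEq (V i)]

lemma sum_card_filter_partner_apply_ne (hμ : ∀ d ∈ D, (boxProdPi A).Adj d (μ d)) :
    ∑ i, #{d ∈ D | μ d i ≠ d i} = #D := by
  calc ∑ i, #{d ∈ D | μ d i ≠ d i} = ∑ d ∈ D, #{i | μ d i ≠ d i} := by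
        simp only [card_filter]
        exact sum_comm
    _ = ∑ d ∈ D, 1 :=
        sum_congr rfl fun d hd => card_filter_apply_ne_of_boxProdPi_adj (hμ d hd).symm
    _ = #D := by simp

lemma sum_two_mul_card_filter_eq_add_card_filter_ne_add_card
    (hμ : ∀ d ∈ D, (boxProdPi A).Adj d (μ d)) :
    ∑ i, (2 * #{d ∈ D | μ d i = d i} + #{d ∈ D | μ d i ≠ d i}) + #D = 2 * n * #D := by
  have hsplit : ∀ i, #{d ∈ D | μ d i = d i} + #{d ∈ D | μ d i ≠ d i} = #D := fun i =>
    card_filter_add_card_filter_not _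
  calc _ = ∑ i, (2 * #{d ∈ D | μ d i = d i} + #{d ∈ D | μ d i ≠ d i}
          + #{d ∈ D | μ d i ≠ d i}) := by
        simp only [sum_add_distrib, sum_card_filter_partner_apply_ne hμ]
    _ = ∑ _i : Fin n, 2 * #D := sum_congr rfl fun i _ => by have := hsplit i; omega
    _ = 2 * n * #D := by
        simp only [sum_const, card_univ, Fintype.card_fin, smul_eq_mul]
        ring

end BoxProduct

namespace boxProdPi

open scoped Classical

variable {n : ℕ} {V : Fin n → Type*}

/-- The cell of `x` together with its `z`-coordinate: every coordinate `j ≠ z` is coarsened to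
the covering edge `β j (x j)` of a minimum paired dominating set of `A j`. -/
def block (β : ∀ i, V i → Sym2 (V i)) (z : Fin n) (x : ∀ j, V j) :
    V z × ∀ j : {j // j ≠ z}, Sym2 (V j) :=
  (x z, fun j => β j (x j))

/-- Coordinate `i` of the cell is blanked out, so `context i` identifies the line through `p` in
direction `i`. -/
def context {z : Fin n} (i : {j // j ≠ z}) (p : V z × ∀ j : {j // j ≠ z}, Sym2 (V j)) :
    V z × ∀ j : {j // j ≠ z}, Option (Sym2 (V j)) :=
  (p.1, fun j => if j = i then none else some (p.2 j))

def IsCovered (A : ∀ i, SimpleGraph (V i)) (D : Finset (∀ i, V i)) (β : ∀ i, V i → Sym2 (V i))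
    (z : Fin n) (p : V z × ∀ j : {j // j ≠ z}, Sym2 (V j)) : Prop :=
  ∃ d ∈ D, (block β z d).2 = p.2 ∧ (d z = p.1 ∨ (A z).Adj (d z) p.1)

def IsFull (A : ∀ i, SimpleGraph (V i)) (D : Finset (∀ i, V i)) (β : ∀ i, V i → Sym2 (V i))
    {z : Fin n} (i : {j // j ≠ z}) (κ : V z × ∀ j : {j // j ≠ z}, Option (Sym2 (V j)))
    (r : Sym2 (V i)) : Prop :=
  ∀ w, β i w = r → ∃ d ∈ D, context i (block β z d) = κ ∧ (A i).Adj (d i) w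

def cells (P : ∀ i, Finset (Sym2 (V i))) (z : Fin n) :
    Finset (∀ j : {j // j ≠ z}, Sym2 (V j)) :=
  Fintype.piFinset fun j => P j

variable {A : ∀ i, SimpleGraph (V i)} {D : Finset (∀ i, V i)} {μ : (∀ i, V i) → ∀ i, V i}
  {β : ∀ i, V i → Sym2 (V i)} {z : Fin n}

lemma block_snd_eq {x y : ∀ j, V j} (h : ∀ j ≠ z, x j = y j) :
    (block β z x).2 = (block β z y).2 :=
  funext fun j => by simp [block, h j j.2]

lemma context_block_eq {i : {j // j ≠ z}} {x y : ∀ j, V j} (h : ∀ j ≠ i.1, x j = y j) :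
    context i (block β z x) = context i (block β z y) := by
  simp only [context, block, h z (Ne.symm i.2), Prod.mk.injEq, true_and]
  funext j
  split_ifs with hj
  · rfl
  · rw [h j fun hji => hj (Subtype.ext hji)]

lemma context_injective {i : {j // j ≠ z}} {p q : V z × ∀ j : {j // j ≠ z}, Sym2 (V j)}
    (hctx : context i p = context i q) (hi : p.2 i = q.2 i) : p = q := by
  simp only [context, Prod.mk.injEq, funext_iff] at hctx
  refine Prod.ext hctx.1 (funext fun j => ?_)
  by_cases hj : j = i
  · exact hj ▸ hi
  · simpa [hj] using hctx.2 j

/-- Otherwise the point with `z`-coordinate `p.1` and, in each direction `i`, a vertex of the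
block `p.2 i` witnessing that it is not full, is not dominated by `D`. -/
lemma exists_isFull_of_not_isCovered (hD : IsDomSet (boxProdPi A) D)
    {p : V z × ∀ j : {j // j ≠ z}, Sym2 (V j)} (hp : ¬IsCovered A D β z p) :
    ∃ i : {j // j ≠ z}, IsFull A D β i (context i p) (p.2 i) := by
  by_contra! hnot
  simp only [IsFull, not_forall, not_exists, not_and, exists_prop] at hnot
  choose w hw hwD using hnot
  set x := (Equiv.piSplitAt z V).symm (p.1, w)
  have hxz : x z = p.1 := by simp [x]
  have hxj : ∀ j : {j // j ≠ z}, x j = w j := fun j => by simp [x, j.2]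
  have hblock : block β z x = p := Prod.ext hxz (funext fun j => by simp [block, hxj, hw])
  have hxD : x ∉ D := fun hx => hp ⟨x, hx, by rw [hblock], .inl hxz⟩
  obtain ⟨d, hd, i₀, hadj, heq⟩ := hD x hxD
  by_cases hi₀ : i₀ = z
  · subst hi₀
    exact hp ⟨d, hd, by rw [block_snd_eq heq, hblock], .inr (hxz ▸ hadj)⟩
  · refine hwD ⟨i₀, hi₀⟩ d hd (by rw [context_block_eq heq, hblock]) ?_
    rw [← hxj ⟨i₀, hi₀⟩]
    exact hadj

variable [∀ i, Fintype (V i)]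

lemma pairedDomNum_le_of_cell (hAz : ∀ v : V z, ∃ u, (A z).Adj u v)
    (hμ : ∀ d ∈ D, μ d ∈ D ∧ (boxProdPi A).Adj d (μ d) ∧ μ (μ d) = d)
    (c : ∀ j : {j // j ≠ z}, Sym2 (V j)) :
    pairedDomNum (A z) ≤ 2 * #{d ∈ {d ∈ D | (block β z d).2 = c} | μ d z = d z} +
      #{d ∈ {d ∈ D | (block β z d).2 = c} | μ d z ≠ d z} +
      2 * #{v | ¬IsCovered A D β z (v, c)} := by
  set T := {d ∈ D | (block β z d).2 = c}
  set uncovered : Finset (V z) := {v | ¬IsCovered A D β z (v, c)}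
  have hdom : IsDomSet (A z)
      (T.image (· z) ∪ (∅ : Finset (Sym2 (V z))).biUnion Sym2.toFinset ∪ uncovered) := by
    intro v hv
    simp only [uncovered, biUnion_empty, union_empty, mem_union, mem_image, mem_filter,
      mem_univ, true_and, not_or, not_not] at hv
    obtain ⟨hnotT, d, hd, hcell, hdv | hadj⟩ := hv
    · exact absurd ⟨d, mem_filter.mpr ⟨hd, hcell⟩, hdv⟩ hnotT
    · exact ⟨d z, mem_union_left _ (mem_union_left _
        (mem_image_of_mem _ (mem_filter.mpr ⟨hd, hcell⟩))), hadj⟩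
  simpa using pairedDomNum_le_of_partner hAz T (· z) μ
    (partner_mem_fiber_of_apply_ne hμ (fun _ _ => block_snd_eq) c) ∅ (by simp) _ hdom

lemma two_mul_card_isFull_le (i : {j // j ≠ z}) (hAi : ∀ v : V i, ∃ u, (A i).Adj u v)
    (hμ : ∀ d ∈ D, μ d ∈ D ∧ (boxProdPi A).Adj d (μ d) ∧ μ (μ d) = d)
    {P : Finset (Sym2 (V i))} (hP : ∀ e ∈ P, e ∈ (A i).edgeSet)
    (hPcard : 2 * #P = pairedDomNum (A i))
    (hβ : ∀ w, β i w ∈ P ∧ ∃ u ∈ β i w, u = w ∨ (A i).Adj u w)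
    (κ : V z × ∀ j : {j // j ≠ z}, Option (Sym2 (V j))) :
    2 * #{r ∈ P | IsFull A D β i κ r} ≤
      2 * #{d ∈ {d ∈ D | context i (block β z d) = κ} | μ d i = d i} +
      #{d ∈ {d ∈ D | context i (block β z d) = κ} | μ d i ≠ d i} := by
  set T := {d ∈ D | context i (block β z d) = κ}
  set notFull := {r ∈ P | ¬IsFull A D β i κ r}
  have hdom : IsDomSet (A i) (T.image (· i) ∪ notFull.biUnion Sym2.toFinset ∪ ∅) := by
    intro w hw
    rw [union_empty] at hw
    by_cases hfull : IsFull A D β i κ (β i w)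
    · obtain ⟨d, hd, hctx, hadj⟩ := hfull w rfl
      exact ⟨d i, mem_union_left _ (mem_union_left _
        (mem_image_of_mem _ (mem_filter.mpr ⟨hd, hctx⟩))), hadj⟩
    · obtain ⟨hβP, u, hu, hwu | hadj⟩ := hβ w
      · refine absurd (mem_union_right _ (mem_biUnion.mpr ⟨β i w, ?_, ?_⟩)) hw
        · exact mem_filter.mpr ⟨hβP, hfull⟩
        · exact Sym2.mem_toFinset.mpr (hwu ▸ hu)
      · refine ⟨u, mem_union_left _ (mem_union_right _ (mem_biUnion.mpr ⟨β i w, ?_, ?_⟩)), hadj⟩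
        · exact mem_filter.mpr ⟨hβP, hfull⟩
        · exact Sym2.mem_toFinset.mpr hu
  have hle := pairedDomNum_le_of_partner hAi T (· i) μ
    (partner_mem_fiber_of_apply_ne hμ (fun _ _ => context_block_eq) κ) notFull
    (fun e he => hP e (mem_filter.mp he).1) ∅ hdom
  have hsplit : #{r ∈ P | IsFull A D β i κ r} + #notFull = #P :=
    card_filter_add_card_filter_not _
  simp only [card_empty, mul_zero, add_zero] at hle
  omega

variable {P : ∀ i, Finset (Sym2 (V i))}

lemma card_mul_pairedDomNum_le (hAz : ∀ v : V z, ∃ u, (A z).Adj u v)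
    (hμ : ∀ d ∈ D, μ d ∈ D ∧ (boxProdPi A).Adj d (μ d) ∧ μ (μ d) = d)
    (hβP : ∀ i w, β i w ∈ P i) :
    #(cells P z) * pairedDomNum (A z) ≤
      2 * #{d ∈ D | μ d z = d z} + #{d ∈ D | μ d z ≠ d z} +
      2 * #{p ∈ univ ×ˢ cells P z | ¬IsCovered A D β z p} := by
  have hcell : ∀ d ∈ D, (block β z d).2 ∈ cells P z := fun d _ =>
    Fintype.mem_piFinset.mpr fun j => hβP j (d j)
  have hbad : #{p ∈ univ ×ˢ cells P z | ¬IsCovered A D β z p} =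
      ∑ c ∈ cells P z, #{v | ¬IsCovered A D β z (v, c)} := by
    simp only [card_filter]
    exact sum_product_right _ _ _
  calc #(cells P z) * pairedDomNum (A z) = ∑ _c ∈ cells P z, pairedDomNum (A z) := by simp
    _ ≤ ∑ c ∈ cells P z, (2 * #{d ∈ {d ∈ D | (block β z d).2 = c} | μ d z = d z} +
          #{d ∈ {d ∈ D | (block β z d).2 = c} | μ d z ≠ d z} +
          2 * #{v | ¬IsCovered A D β z (v, c)}) :=
        sum_le_sum fun c _ => pairedDomNum_le_of_cell hAz hμ c
    _ = _ := by
        rw [sum_add_distrib, sum_add_distrib, ← mul_sum, ← mul_sum,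
          sum_card_filter_fiber D _ _ hcell, sum_card_filter_fiber D _ _ hcell, hbad]

lemma two_mul_card_isFull_context_le (i : {j // j ≠ z}) (hAi : ∀ v : V i, ∃ u, (A i).Adj u v)
    (hμ : ∀ d ∈ D, μ d ∈ D ∧ (boxProdPi A).Adj d (μ d) ∧ μ (μ d) = d)
    (hP : ∀ e ∈ P i, e ∈ (A i).edgeSet) (hPcard : 2 * #(P i) = pairedDomNum (A i))
    (hβ : ∀ w, β i w ∈ P i ∧ ∃ u ∈ β i w, u = w ∨ (A i).Adj u w) :
    2 * #{p ∈ univ ×ˢ cells P z | IsFull A D β i (context i p) (p.2 i)} ≤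
      2 * #{d ∈ D | μ d i = d i} + #{d ∈ D | μ d i ≠ d i} := by
  set S := {p ∈ (univ : Finset (V z)) ×ˢ cells P z | IsFull A D β i (context i p) (p.2 i)}
  have hfiber : ∀ κ, #{p ∈ S | context i p = κ} ≤ #{r ∈ P i | IsFull A D β i κ r} := by
    intro κ
    refine card_le_card_of_injOn (fun p => p.2 i) (fun p hp => ?_)
      fun p hp q hq h => context_injective (by simp_all) h
    obtain ⟨hpS, rfl⟩ := mem_filter.mp (mem_coe.mp hp)
    obtain ⟨hpcells, hpfull⟩ := mem_filter.mp hpS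
    exact mem_filter.mpr ⟨Fintype.mem_piFinset.mp (mem_product.mp hpcells).2 i, hpfull⟩
  calc 2 * #S = ∑ κ : V z × ∀ j : {j // j ≠ z}, Option (Sym2 (V j)),
        2 * #{p ∈ S | context i p = κ} := by
        rw [card_eq_sum_card_fiberwise (t := univ) (f := context i) (by simp), mul_sum]
    _ ≤ ∑ κ, (2 * #{d ∈ {d ∈ D | context i (block β z d) = κ} | μ d i = d i} +
          #{d ∈ {d ∈ D | context i (block β z d) = κ} | μ d i ≠ d i}) :=
        sum_le_sum fun κ _ => (Nat.mul_le_mul_left 2 (hfiber κ)).trans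
          (two_mul_card_isFull_le i hAi hμ hP hPcard hβ κ)
    _ = _ := by
        rw [sum_add_distrib, ← mul_sum, sum_card_filter_fiber D univ _ (by simp),
          sum_card_filter_fiber D univ _ (by simp)]

lemma two_mul_card_not_isCovered_le (hA : ∀ i, ∀ v : V i, ∃ u, (A i).Adj u v)
    (hμ : ∀ d ∈ D, μ d ∈ D ∧ (boxProdPi A).Adj d (μ d) ∧ μ (μ d) = d)
    (hD : IsDomSet (boxProdPi A) D) (hP : ∀ i, ∀ e ∈ P i, e ∈ (A i).edgeSet)
    (hPcard : ∀ i, 2 * #(P i) = pairedDomNum (A i))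
    (hβ : ∀ i w, β i w ∈ P i ∧ ∃ u ∈ β i w, u = w ∨ (A i).Adj u w) :
    2 * #{p ∈ univ ×ˢ cells P z | ¬IsCovered A D β z p} ≤
      ∑ i : {j // j ≠ z}, (2 * #{d ∈ D | μ d i = d i} + #{d ∈ D | μ d i ≠ d i}) := by
  have hsub : {p ∈ (univ : Finset (V z)) ×ˢ cells P z | ¬IsCovered A D β z p} ⊆
      univ.biUnion fun i : {j // j ≠ z} =>
        {p ∈ univ ×ˢ cells P z | IsFull A D β i (context i p) (p.2 i)} := by
    intro p hp
    obtain ⟨hpt, hpc⟩ := mem_filter.mp hp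
    obtain ⟨i, hi⟩ := exists_isFull_of_not_isCovered hD hpc
    exact mem_biUnion.mpr ⟨i, mem_univ _, mem_filter.mpr ⟨hpt, hi⟩⟩
  calc _ ≤ 2 * ∑ i : {j // j ≠ z},
        #{p ∈ univ ×ˢ cells P z | IsFull A D β i (context i p) (p.2 i)} :=
        Nat.mul_le_mul_left 2 ((card_le_card hsub).trans card_biUnion_le)
    _ ≤ _ := by
        rw [mul_sum]
        exact sum_le_sum fun i _ =>
          two_mul_card_isFull_context_le i (hA i) hμ (hP i) (hPcard i) (hβ i)

theorem card_cells_mul_pairedDomNum_add_card_le (hA : ∀ i, ∀ v : V i, ∃ u, (A i).Adj u v)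
    (hμ : ∀ d ∈ D, μ d ∈ D ∧ (boxProdPi A).Adj d (μ d) ∧ μ (μ d) = d)
    (hD : IsDomSet (boxProdPi A) D) (hP : ∀ i, ∀ e ∈ P i, e ∈ (A i).edgeSet)
    (hPcard : ∀ i, 2 * #(P i) = pairedDomNum (A i))
    (hβ : ∀ i w, β i w ∈ P i ∧ ∃ u ∈ β i w, u = w ∨ (A i).Adj u w) :
    #(cells P z) * pairedDomNum (A z) + #D ≤ 2 * n * #D := by
  have hcell := card_mul_pairedDomNum_le (hA z) hμ (P := P) fun i w => (hβ i w).1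
  have hbad := two_mul_card_not_isCovered_le (z := z) hA hμ hD hP hPcard hβ
  have hsum := sum_two_mul_card_filter_eq_add_card_filter_ne_add_card fun d hd => (hμ d hd).2.1
  rw [Fintype.sum_eq_add_sum_subtype_ne _ z] at hsum
  omega

end boxProdPi

/-- `γ_pr(A^1)···γ_pr(A^n) ≤ 2^(n-1)·(2n-1)·γ_pr(A^1 □ ⋯ □ A^n)` for graphs without
isolated vertices. -/
theorem prod_pairedDomNum_le_mul_pairedDomNum_boxProdPi
    {n : ℕ} (hn : 1 ≤ n) {V : Fin n → Type*} [∀ i, Fintype (V i)]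
    (A : ∀ i, SimpleGraph (V i))
    (hA : ∀ i, ∀ v : V i, ∃ u : V i, (A i).Adj u v) :
    ∏ i, pairedDomNum (A i) ≤ 2 ^ (n - 1) * (2 * n - 1) * pairedDomNum (boxProdPi A) := by
  classical
  set z : Fin n := ⟨0, hn⟩
  obtain ⟨D, hD, hDcard⟩ :=
    exists_isPairedDomSet_card_eq_pairedDomNum (boxProdPi_exists_adj z (hA z))
  obtain ⟨μ, hμ⟩ := hD.exists_partner
  choose P hP hcover hPcard using fun i => exists_edges_two_mul_card_eq_pairedDomNum (hA i)
  choose β hβ using hcover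
  have key := boxProdPi.card_cells_mul_pairedDomNum_add_card_le (z := z) hA hμ hD.1 hP hPcard hβ
  have hprod : ∏ i, pairedDomNum (A i) =
      2 ^ (n - 1) * (#(boxProdPi.cells P z) * pairedDomNum (A z)) := by
    rw [Fintype.prod_eq_mul_prod_subtype_ne _ z, boxProdPi.cells, Fintype.card_piFinset]
    simp_rw [← hPcard, prod_mul_distrib, prod_const]
    simp only [card_univ, Fintype.card_subtype_compl, Fintype.card_fin, Fintype.card_unique]
    ring
  rw [hprod, ← hDcard, mul_assoc]
  refine Nat.mul_le_mul_left _ ?_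
  rw [Nat.sub_one_mul]
  omega
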